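/- arXiv:1902.09586 — 2 statements merged into one kernel-verified Lean document; each statement's English description precedes it below -/
import Mathlib

section
/- EUCS-based 2-itemset pruning is sound: for any itemset Y containing two items y, z with RTWU({y,z}) < minUtil, Y is not a high-utility itemset (u(Y) < minUtil). -/
open Finset

def utilT {α ι : Type} (pr : α → ℤ) (q : α → ι → ℕ) (X : Finset α) (t : ι) : ℤ :=
  ∑ i ∈ X, pr i * (q i t : ℤ)

def totU {α ι : Type} [DecidableEq α] (D : Finset ι) (Trans : ι → Finset α)
    (pr : α → ℤ) (q : α → ι → ℕ) (X : Finset α) : ℤ :=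
  ∑ t ∈ D.filter (fun t => X ⊆ Trans t), utilT pr q X t

def RTU {α ι : Type} [DecidableEq α] (Trans : ι → Finset α)
    (pr : α → ℤ) (q : α → ι → ℕ) (t : ι) : ℤ :=
  ∑ i ∈ (Trans t).filter (fun i => 0 < pr i), pr i * (q i t : ℤ)

def RTWU {α ι : Type} [DecidableEq α] (D : Finset ι) (Trans : ι → Finset α)
    (pr : α → ℤ) (q : α → ι → ℕ) (X : Finset α) : ℤ :=
  ∑ t ∈ D.filter (fun t => X ⊆ Trans t), RTU Trans pr q t

/-! RTU keeps exactly the positive terms of the transaction, so it dominates the utility of every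
itemset the transaction contains; summing over the supporting transactions, RTWU dominates total
utility, and RTWU is antitone because a larger itemset has fewer supporting transactions. -/

section

variable {α ι : Type} [DecidableEq α] (D : Finset ι) (Trans : ι → Finset α)
  (pr : α → ℤ) (q : α → ι → ℕ)

lemma RTU_eq_sum_ite (t : ι) :
    RTU Trans pr q t = ∑ i ∈ Trans t, if 0 < pr i then pr i * (q i t : ℤ) else 0 :=
  sum_filter _ _

lemma RTU_nonneg (t : ι) : 0 ≤ RTU Trans pr q t :=
  sum_nonneg fun _ hi => mul_nonneg (mem_filter.1 hi).2.le (Int.natCast_nonneg _)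

lemma utilT_le_RTU {Y : Finset α} {t : ι} (hY : Y ⊆ Trans t) :
    utilT pr q Y t ≤ RTU Trans pr q t := by
  have term_le (i : α) : pr i * (q i t : ℤ) ≤ if 0 < pr i then pr i * (q i t : ℤ) else 0 := by
    split_ifs with hpos
    · exact le_rfl
    · exact mul_nonpos_of_nonpos_of_nonneg (not_lt.1 hpos) (Int.natCast_nonneg _)
  have ite_nonneg (i : α) : 0 ≤ if 0 < pr i then pr i * (q i t : ℤ) else 0 := by
    split_ifs with hpos
    · exact mul_nonneg hpos.le (Int.natCast_nonneg _)
    · exact le_rfl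
  calc utilT pr q Y t
      ≤ ∑ i ∈ Y, if 0 < pr i then pr i * (q i t : ℤ) else 0 := sum_le_sum fun i _ => term_le i
    _ ≤ ∑ i ∈ Trans t, if 0 < pr i then pr i * (q i t : ℤ) else 0 :=
        sum_le_sum_of_subset_of_nonneg hY fun i _ _ => ite_nonneg i
    _ = RTU Trans pr q t := (RTU_eq_sum_ite Trans pr q t).symm

lemma totU_le_RTWU (X : Finset α) : totU D Trans pr q X ≤ RTWU D Trans pr q X :=
  sum_le_sum fun _ ht => utilT_le_RTU Trans pr q (mem_filter.1 ht).2

lemma RTWU_anti {X Y : Finset α} (hXY : X ⊆ Y) :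
    RTWU D Trans pr q Y ≤ RTWU D Trans pr q X :=
  sum_le_sum_of_subset_of_nonneg (monotone_filter_right D fun _ _ hY => hXY.trans hY)
    fun t _ _ => RTU_nonneg Trans pr q t

end

theorem stmt11_general {α ι : Type} [DecidableEq α] (D : Finset ι) (Trans : ι → Finset α)
    (pr : α → ℤ) (q : α → ι → ℕ)
    (minUtil : ℤ) (y z : α)
    (h : RTWU D Trans pr q {y, z} < minUtil) :
    ∀ Y : Finset α, {y, z} ⊆ Y → totU D Trans pr q Y < minUtil := fun Y hY =>
  calc totU D Trans pr q Y
      ≤ RTWU D Trans pr q Y := totU_le_RTWU D Trans pr q Y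
    _ ≤ RTWU D Trans pr q {y, z} := RTWU_anti D Trans pr q hY
    _ < minUtil := h

theorem stmt11 {α ι : Type} [DecidableEq α] (D : Finset ι) (Trans : ι → Finset α)
    (pr : α → ℤ) (q : α → ι → ℕ) (hq : ∀ i t, 0 < q i t)
    (minUtil : ℤ) (y z : α) (hyz : y ≠ z)
    (h : RTWU D Trans pr q {y, z} < minUtil) :
    ∀ Y : Finset α, {y, z} ⊆ Y → totU D Trans pr q Y < minUtil :=
  stmt11_general D Trans pr q minUtil y z h
end

section
/- PU-Prune soundness (utility part): for itemsets Y and an item z with z ≻ y for all y ∈ Y, if SUM(Y.pu) + SUM(Y.rpu) − Σ_{T∈D, Y⊆T, z∉T} (pu(Y,T) + rpu(Y,T)) < minUtil, then u(W) < minUtil for every extension W of Y∪{z} by items succeeding z in the order. -/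
open Finset

def puT {α ι : Type} [DecidableEq α] (pr : α → ℤ) (q : α → ι → ℕ) (Z : Finset α) (t : ι) : ℤ :=
  ∑ i ∈ Z.filter (fun i => 0 < pr i), pr i * (q i t : ℤ)

def rpuT {α ι : Type} [DecidableEq α] [LinearOrder α] (Trans : ι → Finset α)
    (pr : α → ℤ) (q : α → ι → ℕ) (Z : Finset α) (t : ι) : ℤ :=
  ∑ i ∈ (Trans t).filter (fun i => (∀ x ∈ Z, x < i) ∧ 0 < pr i), pr i * (q i t : ℤ)

def SUMpu {α ι : Type} [DecidableEq α] (D : Finset ι) (Trans : ι → Finset α)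
    (pr : α → ℤ) (q : α → ι → ℕ) (Z : Finset α) : ℤ :=
  ∑ t ∈ D.filter (fun t => Z ⊆ Trans t), puT pr q Z t

def SUMrpu {α ι : Type} [DecidableEq α] [LinearOrder α] (D : Finset ι) (Trans : ι → Finset α)
    (pr : α → ℤ) (q : α → ι → ℕ) (Z : Finset α) : ℤ :=
  ∑ t ∈ D.filter (fun t => Z ⊆ Trans t), rpuT Trans pr q Z t

/-!
In every transaction `T ⊇ W`, dropping the items of negative profit can only increase the
utility of `W`; the remaining items of `W` lie either in `Y` (counted by `pu(Y,T)`) or in `T`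
above all of `Y` (counted by `rpu(Y,T)`), so `u(W,T) ≤ pu(Y,T) + rpu(Y,T)`. Summing over the
transactions containing `W`, all of which contain `Y ∪ {z}`, bounds `u(W)` by the pruning
quantity, since the summands are nonnegative.
-/

section

variable {α ι : Type} (Trans : ι → Finset α) (pr : α → ℤ) (q : α → ι → ℕ)

lemma utilT_le_sum_filter_pos (X : Finset α) (t : ι) :
    utilT pr q X t ≤ ∑ i ∈ X.filter (fun i => 0 < pr i), pr i * (q i t : ℤ) := by
  have hneg : ∑ i ∈ X.filter (fun i => ¬ 0 < pr i), pr i * (q i t : ℤ) ≤ 0 :=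
    sum_nonpos fun _ hi =>
      mul_nonpos_of_nonpos_of_nonneg (not_lt.1 (mem_filter.1 hi).2) (Int.natCast_nonneg _)
  rw [utilT, ← sum_filter_add_sum_filter_not X (fun i => 0 < pr i)]
  linarith

variable [DecidableEq α]

lemma puT_nonneg (Z : Finset α) (t : ι) : 0 ≤ puT pr q Z t :=
  sum_nonneg fun _ hi => mul_nonneg (mem_filter.1 hi).2.le (Int.natCast_nonneg _)

variable [LinearOrder α]

lemma rpuT_nonneg (Z : Finset α) (t : ι) : 0 ≤ rpuT Trans pr q Z t :=
  sum_nonneg fun _ hi => mul_nonneg (mem_filter.1 hi).2.2.le (Int.natCast_nonneg _)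

lemma puT_add_rpuT_eq_sum_union (Z : Finset α) (t : ι) :
    puT pr q Z t + rpuT Trans pr q Z t =
      ∑ i ∈ Z.filter (fun i => 0 < pr i) ∪
        (Trans t).filter (fun i => (∀ x ∈ Z, x < i) ∧ 0 < pr i), pr i * (q i t : ℤ) := by
  refine (sum_union ?_).symm
  refine disjoint_left.2 fun i hiZ hiT => ?_
  exact lt_irrefl i ((mem_filter.1 hiT).2.1 i (mem_filter.1 hiZ).1)

lemma utilT_le_puT_add_rpuT {Y W : Finset α} {t : ι} (hWT : W ⊆ Trans t)
    (hW : ∀ i ∈ W \ Y, ∀ y ∈ Y, y < i) :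
    utilT pr q W t ≤ puT pr q Y t + rpuT Trans pr q Y t := by
  refine (utilT_le_sum_filter_pos pr q W t).trans ?_
  rw [puT_add_rpuT_eq_sum_union]
  apply sum_le_sum_of_subset_of_nonneg
  · intro i hi
    obtain ⟨hiW, hip⟩ := mem_filter.1 hi
    by_cases hiY : i ∈ Y
    · exact mem_union_left _ (mem_filter.2 ⟨hiY, hip⟩)
    · exact mem_union_right _ (mem_filter.2 ⟨hWT hiW, hW i (mem_sdiff.2 ⟨hiW, hiY⟩), hip⟩)
  · intro i hi _
    have hip : 0 < pr i := by
      rcases mem_union.1 hi with hi | hi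
      exacts [(mem_filter.1 hi).2, (mem_filter.1 hi).2.2]
    positivity

lemma SUMpu_add_SUMrpu_sub_eq (D : Finset ι) (Y : Finset α) (z : α) :
    SUMpu D Trans pr q Y + SUMrpu D Trans pr q Y -
        ∑ t ∈ D.filter (fun t => Y ⊆ Trans t ∧ z ∉ Trans t),
          (puT pr q Y t + rpuT Trans pr q Y t) =
      ∑ t ∈ D.filter (fun t => Y ⊆ Trans t ∧ z ∈ Trans t),
        (puT pr q Y t + rpuT Trans pr q Y t) := by
  have hsplit := sum_filter_add_sum_filter_not (D.filter (fun t => Y ⊆ Trans t))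
    (fun t => z ∈ Trans t) (fun t => puT pr q Y t + rpuT Trans pr q Y t)
  rw [filter_filter, filter_filter] at hsplit
  rw [SUMpu, SUMrpu, ← sum_add_distrib, ← hsplit, add_sub_cancel_right]

lemma totU_le_sum_puT_add_rpuT (D : Finset ι) {Y W : Finset α} {z : α} (hzW : z ∈ W)
    (hYW : Y ⊆ W) (hW : ∀ i ∈ W \ Y, ∀ y ∈ Y, y < i) :
    totU D Trans pr q W ≤
      ∑ t ∈ D.filter (fun t => Y ⊆ Trans t ∧ z ∈ Trans t),
        (puT pr q Y t + rpuT Trans pr q Y t) :=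
  calc totU D Trans pr q W
      ≤ ∑ t ∈ D.filter (fun t => W ⊆ Trans t), (puT pr q Y t + rpuT Trans pr q Y t) :=
        sum_le_sum fun t ht => utilT_le_puT_add_rpuT Trans pr q (mem_filter.1 ht).2 hW
    _ ≤ _ := by
        apply sum_le_sum_of_subset_of_nonneg
        · intro t ht
          obtain ⟨htD, hWT⟩ := mem_filter.1 ht
          exact mem_filter.2 ⟨htD, hYW.trans hWT, hWT hzW⟩
        · intro t _ _
          exact add_nonneg (puT_nonneg pr q Y t) (rpuT_nonneg Trans pr q Y t)

end

theorem stmt12_general {α ι : Type} [DecidableEq α] [LinearOrder α] (D : Finset ι)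
    (Trans : ι → Finset α) (pr : α → ℤ) (q : α → ι → ℕ)
    (minUtil : ℤ) (Y : Finset α) (z : α) (hz : ∀ y ∈ Y, y < z)
    (h : SUMpu D Trans pr q Y + SUMrpu D Trans pr q Y -
        (∑ t ∈ D.filter (fun t => Y ⊆ Trans t ∧ z ∉ Trans t),
          (puT pr q Y t + rpuT Trans pr q Y t)) < minUtil) :
    ∀ W : Finset α, insert z Y ⊆ W → (∀ j ∈ W \ insert z Y, z < j) →
      totU D Trans pr q W < minUtil := by
  intro W hWsub hWext
  rw [SUMpu_add_SUMrpu_sub_eq] at h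
  refine lt_of_le_of_lt (totU_le_sum_puT_add_rpuT Trans pr q D (hWsub (mem_insert_self z Y))
    ((subset_insert z Y).trans hWsub) fun i hi y hy => ?_) h
  rcases eq_or_ne i z with rfl | hiz
  · exact hz y hy
  · exact (hz y hy).trans (hWext i (by simp_all))

/-- PU-Prune soundness, utility part. -/
theorem stmt12 {α ι : Type} [DecidableEq α] [LinearOrder α] (D : Finset ι)
    (Trans : ι → Finset α) (pr : α → ℤ) (q : α → ι → ℕ)
    (hord : ∀ i j : α, 0 < pr i → pr j < 0 → i < j)
    (minUtil : ℤ) (Y : Finset α) (z : α) (hz : ∀ y ∈ Y, y < z)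
    (h : SUMpu D Trans pr q Y + SUMrpu D Trans pr q Y -
        (∑ t ∈ D.filter (fun t => Y ⊆ Trans t ∧ z ∉ Trans t),
          (puT pr q Y t + rpuT Trans pr q Y t)) < minUtil) :
    ∀ W : Finset α, insert z Y ⊆ W → (∀ j ∈ W \ insert z Y, z < j) →
      totU D Trans pr q W < minUtil :=
  stmt12_general D Trans pr q minUtil Y z hz h
end
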